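/- arXiv:2410.23849 — 3 statements merged into one kernel-verified Lean document; each statement's English description precedes it below -/
import Mathlib

section
/- Let p ∈ ℕ, ℓ ≥ 1, V ∈ ℝ^{p×ℓ}, B a real symmetric p×p matrix, C ∈ ℝ^{3ℓ×p}, M₁, M₂, M₃ real symmetric ℓ×ℓ matrices, and set U := [V; I_ℓ; I_ℓ; −I_ℓ] ∈ ℝ^{(p+3ℓ)×ℓ} (block column concatenation). Consider the set 𝒮 of real symmetric positive semidefinite (p+3ℓ)×(p+3ℓ) matrices X satisfying X_{1:p,1:p} = B, X_{p+1:p+3ℓ,1:p} = C, X_{p+1:p+ℓ,p+1:p+ℓ} = M₁, X_{p+ℓ+1:p+2ℓ,p+ℓ+1:p+2ℓ} = M₂, X_{p+2ℓ+1:p+3ℓ,p+2ℓ+1:p+3ℓ} = M₃, and UᵀXU = 0_{ℓ×ℓ}. Then 𝒮 is either empty or contains an element of rank at most p + φ(ℓ). -/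
open Matrix

noncomputable section

/-- Feasibility predicate for the set in Definition of `φ`. -/
def phiFeas (l : ℕ) (U : Matrix (Fin (2*l)) (Fin l) ℝ)
    (M : Matrix (Fin l) (Fin l) ℝ)
    (Y : Matrix (Fin (2*l)) (Fin (2*l)) ℝ) : Prop :=
  Y.PosSemidef ∧ Uᵀ * Y * U = M ∧
  (∀ i j : Fin l, Y ⟨(i : ℕ), by omega⟩ ⟨(j : ℕ), by omega⟩ = if i = j then (1:ℝ) else 0) ∧
  (∀ i j : Fin l, Y ⟨l + (i : ℕ), by omega⟩ ⟨l + (j : ℕ), by omega⟩ = if i = j then (1:ℝ) else 0)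

/-- `φ(ℓ)`. -/
def phi (l : ℕ) : ℕ :=
  sInf {k : ℕ |
    ∀ (U : Matrix (Fin (2*l)) (Fin l) ℝ) (M : Matrix (Fin l) (Fin l) ℝ),
      M.IsSymm → (∃ Y, phiFeas l U M Y) → ∃ Y, phiFeas l U M Y ∧ Y.rank ≤ k}

/-- The `(p+3ℓ)×ℓ` block matrix `U = [V; I_ℓ; I_ℓ; −I_ℓ]`. -/
def Umat (p l : ℕ) (V : Matrix (Fin p) (Fin l) ℝ) : Matrix (Fin (p + 3*l)) (Fin l) ℝ :=
  Matrix.of fun i j =>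
    if h : (i : ℕ) < p then V ⟨(i : ℕ), h⟩ j
    else (if (i : ℕ) = p + (j : ℕ) then 1 else 0) + (if (i : ℕ) = p + l + (j : ℕ) then 1 else 0)
      - (if (i : ℕ) = p + 2*l + (j : ℕ) then 1 else 0)

/-- Membership in the set `𝒮` of Lemma on rank reduction. -/
def Sfeas (p l : ℕ) (V : Matrix (Fin p) (Fin l) ℝ) (B : Matrix (Fin p) (Fin p) ℝ)
    (C : Matrix (Fin (3*l)) (Fin p) ℝ) (M1 M2 M3 : Matrix (Fin l) (Fin l) ℝ)
    (X : Matrix (Fin (p + 3*l)) (Fin (p + 3*l)) ℝ) : Prop :=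
  X.PosSemidef ∧
  (∀ i j : Fin p, X ⟨(i : ℕ), by omega⟩ ⟨(j : ℕ), by omega⟩ = B i j) ∧
  (∀ (i : Fin (3*l)) (j : Fin p), X ⟨p + (i : ℕ), by omega⟩ ⟨(j : ℕ), by omega⟩ = C i j) ∧
  (∀ i j : Fin l, X ⟨p + (i : ℕ), by omega⟩ ⟨p + (j : ℕ), by omega⟩ = M1 i j) ∧
  (∀ i j : Fin l, X ⟨p + l + (i : ℕ), by omega⟩ ⟨p + l + (j : ℕ), by omega⟩ = M2 i j) ∧
  (∀ i j : Fin l, X ⟨p + 2*l + (i : ℕ), by omega⟩ ⟨p + 2*l + (j : ℕ), by omega⟩ = M3 i j) ∧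
  (Umat p l V)ᵀ * X * (Umat p l V) = 0

/-! Split `X = Z Zᵀ + (0 ⊕ S)` along the first `p` coordinates, with `rank (Z Zᵀ) ≤ p` and `S`
positive semidefinite. As both summands are positive semidefinite, `Uᵀ X U = 0` forces
`S [I; I; -I] = 0`, so `S = J S₂ Jᵀ` with `J = [I 0; 0 I; I I]` and `S₂` the leading
`2ℓ × 2ℓ` block of `S`. Write `S₂ = D Y₀ Dᵀ` with `D` block diagonal and `Y₀` positive semidefinite
with identity diagonal blocks. Then `Y₀` is feasible for the problem defining `φ(ℓ)` with
`U := Dᵀ [I; I]`, which therefore has a feasible `Y` of rank at most `φ(ℓ)`. The matrix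
`T = D Y Dᵀ` has the same diagonal blocks and the same compression `[I I] T [I; I]` as `S₂`,
and `Z Zᵀ + (0 ⊕ J T Jᵀ)` is the required element of `𝒮`. -/

theorem Real.one_sub_inv_sqrt_mul_sqrt_mul_eq_zero {x : ℝ} (hx : 0 ≤ x) :
    (1 - (√x)⁻¹ * √x) * x = 0 := by
  rcases hx.eq_or_lt with rfl | hx
  · simp
  · simp [(Real.sqrt_pos.2 hx).ne']

theorem Real.inv_sqrt_mul_mul_inv_sqrt_le_one (x : ℝ) : (√x)⁻¹ * x * (√x)⁻¹ ≤ 1 := by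
  rcases le_or_gt x 0 with hx | hx
  · simp [Real.sqrt_eq_zero'.2 hx]
  · refine le_of_eq ?_
    field_simp
    rw [Real.sq_sqrt hx.le]

namespace Matrix

theorem PosSemidef.exists_unitary_conj_eq_diagonal {m : Type*} [Fintype m] [DecidableEq m]
    {N : Matrix m m ℝ} (hN : N.PosSemidef) :
    ∃ (V : Matrix m m ℝ) (d : m → ℝ),
      Vᴴ * V = 1 ∧ V * Vᴴ = 1 ∧ Vᴴ * N * V = diagonal d ∧ ∀ i, 0 ≤ d i := by
  refine ⟨hN.1.eigenvectorUnitary, hN.1.eigenvalues,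
    Unitary.coe_star_mul_self hN.1.eigenvectorUnitary,
    Unitary.coe_mul_star_self hN.1.eigenvectorUnitary, ?_, hN.eigenvalues_nonneg⟩
  have := hN.1.conjStarAlgAut_star_eigenvectorUnitary
  rwa [Unitary.conjStarAlgAut_star_apply] at this

/-- Writing `GᴴG = V Λ Vᴴ`, take `A = V Λ^{1/2}` and `Q = G V Λ^{-1/2}`, where `(√0)⁻¹ = 0`
makes `Λ^{-1/2}` a pseudo-inverse. -/
theorem exists_eq_contraction_mul_conjTranspose {k m : Type*} [Fintype k] [Fintype m]
    [DecidableEq m] (G : Matrix k m ℝ) :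
    ∃ (Q : Matrix k m ℝ) (A : Matrix m m ℝ),
      G = Q * Aᴴ ∧ A * Aᴴ = Gᴴ * G ∧ (1 - Qᴴ * Q).PosSemidef := by
  obtain ⟨V, ev, hVV, hVV', hΛ, hev⟩ :=
    (posSemidef_conjTranspose_mul_self G).exists_unitary_conj_eq_diagonal
  have hGG : Gᴴ * G = V * diagonal ev * Vᴴ := by
    rw [← hΛ, ← mul_assoc, ← mul_assoc, hVV', one_mul, mul_assoc, hVV', mul_one]
  set s : m → ℝ := fun i => √(ev i)
  set t : m → ℝ := fun i => (√(ev i))⁻¹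
  set c : m → ℝ := fun i => 1 - t i * s i
  have hker : G * V * diagonal c = 0 := by
    rw [← conjTranspose_mul_self_eq_zero]
    calc (G * V * diagonal c)ᴴ * (G * V * diagonal c)
        = diagonal c * (Vᴴ * (Gᴴ * G) * V) * diagonal c := by
          simp only [conjTranspose_mul, diagonal_conjTranspose, star_trivial, Matrix.mul_assoc]
      _ = 0 := by
          rw [hΛ, diagonal_mul_diagonal, diagonal_mul_diagonal, diagonal_eq_zero]
          ext i
          rw [Real.one_sub_inv_sqrt_mul_sqrt_mul_eq_zero (hev i), zero_mul, Pi.zero_apply]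
  refine ⟨G * V * diagonal t, V * diagonal s, ?_, ?_, ?_⟩
  · have hc : diagonal c = 1 - diagonal t * diagonal s := by
      rw [diagonal_mul_diagonal, ← diagonal_one, diagonal_sub]
    calc G = G * V * Vᴴ - G * V * diagonal c * Vᴴ := by
          rw [hker, Matrix.zero_mul, sub_zero, Matrix.mul_assoc, hVV', Matrix.mul_one]
      _ = G * V * diagonal t * (V * diagonal s)ᴴ := by
          rw [hc, Matrix.mul_sub, Matrix.sub_mul, Matrix.mul_one, sub_sub_cancel,
            conjTranspose_mul, diagonal_conjTranspose, star_trivial]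
          simp only [Matrix.mul_assoc]
  · rw [hGG, conjTranspose_mul, diagonal_conjTranspose, star_trivial, Matrix.mul_assoc,
      ← Matrix.mul_assoc (diagonal s), diagonal_mul_diagonal, ← Matrix.mul_assoc]
    congr 3
    exact funext fun i => Real.mul_self_sqrt (hev i)
  · have hQQ : (G * V * diagonal t)ᴴ * (G * V * diagonal t) =
        diagonal fun i => t i * ev i * t i := by
      rw [← diagonal_mul_diagonal, ← diagonal_mul_diagonal, ← hΛ]
      simp only [conjTranspose_mul, diagonal_conjTranspose, star_trivial, Matrix.mul_assoc]
    rw [hQQ, ← diagonal_one, diagonal_sub, posSemidef_diagonal_iff]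
    exact fun i => sub_nonneg.2 (Real.inv_sqrt_mul_mul_inv_sqrt_le_one _)

theorem rank_add_le {m n : Type*} [Fintype n] (A B : Matrix m n ℝ) :
    (A + B).rank ≤ A.rank + B.rank := by
  rw [rank, rank, rank, mulVecLin_add]
  exact (Submodule.finrank_mono (LinearMap.range_add_le _ _)).trans
    (Submodule.finrank_add_le_finrank_add_finrank _ _)

theorem rank_mul_mul_le {k m n : Type*} [Fintype k] [Fintype m] [Fintype n] (A : Matrix k m ℝ)
    (B : Matrix m n ℝ) (C : Matrix n k ℝ) : (A * B * C).rank ≤ B.rank :=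
  (rank_mul_le_left _ _).trans (rank_mul_le_right _ _)

open scoped MatrixOrder in
theorem PosSemidef.eq_zero_of_add_eq_zero {m : Type*} {A B : Matrix m m ℝ} (hA : A.PosSemidef)
    (hB : B.PosSemidef) (h : A + B = 0) : A = 0 :=
  ((add_eq_zero_iff_of_nonneg hA.nonneg hB.nonneg).1 h).1

open scoped MatrixOrder in
theorem PosSemidef.mul_eq_zero_of_conjTranspose_mul_mul_eq_zero {m n : Type*} [Fintype m]
    [DecidableEq m] {S : Matrix m m ℝ} (hS : S.PosSemidef) {E : Matrix m n ℝ}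
    (h : Eᴴ * S * E = 0) : S * E = 0 := by
  obtain ⟨B, rfl⟩ : ∃ B : Matrix m m ℝ, S = Bᴴ * B :=
    CStarAlgebra.nonneg_iff_eq_star_mul_self.mp hS.nonneg
  have hBE : B * E = 0 := by
    rw [← conjTranspose_mul_self_eq_zero, conjTranspose_mul, ← h]
    simp only [Matrix.mul_assoc]
  rw [Matrix.mul_assoc, hBE, Matrix.mul_zero]

theorem fromBlocks_zero_zero_mul_mul_conjTranspose {m n m' n' : Type*} [Fintype m] [Fintype n]
    (A₁ : Matrix m' m ℝ) (A₂ : Matrix n' n ℝ) (Y : Matrix (m ⊕ n) (m ⊕ n) ℝ) :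
    fromBlocks A₁ 0 0 A₂ * Y * (fromBlocks A₁ 0 0 A₂)ᴴ =
      fromBlocks (A₁ * Y.toBlocks₁₁ * A₁ᴴ) (A₁ * Y.toBlocks₁₂ * A₂ᴴ)
        (A₂ * Y.toBlocks₂₁ * A₁ᴴ) (A₂ * Y.toBlocks₂₂ * A₂ᴴ) := by
  conv_lhs => rw [← fromBlocks_toBlocks Y]
  rw [fromBlocks_conjTranspose, fromBlocks_multiply, fromBlocks_multiply]
  simp

theorem rank_fromBlocks_zero_zero_zero_le {m n : Type*} [Fintype m] [Fintype n] [DecidableEq n]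
    (M : Matrix n n ℝ) : (fromBlocks (0 : Matrix m m ℝ) 0 0 M).rank ≤ M.rank := by
  have h : fromBlocks (0 : Matrix m m ℝ) 0 0 M =
      fromRows (0 : Matrix m n ℝ) 1 * M * (fromRows (0 : Matrix m n ℝ) 1)ᴴ := by
    rw [conjTranspose_fromRows_eq_fromCols_conjTranspose, fromRows_mul, fromRows_mul_fromCols]
    simp
  rw [h]
  exact rank_mul_mul_le _ _ _

theorem conjTranspose_fromRows_mul_fromBlocks_zero_mul {k m n : Type*} [Fintype m] [Fintype n]
    (V : Matrix m k ℝ) (E : Matrix n k ℝ) (M : Matrix n n ℝ) :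
    (fromRows V E)ᴴ * fromBlocks (0 : Matrix m m ℝ) 0 0 M * fromRows V E = Eᴴ * M * E := by
  rw [conjTranspose_fromRows_eq_fromCols_conjTranspose, fromCols_mul_fromBlocks,
    fromCols_mul_fromRows]
  simp

section BlockFactorizations

variable {m n : Type*} [Fintype m] [Fintype n] [DecidableEq m] [DecidableEq n]

theorem PosSemidef.fromBlocks_zero_zero {A : Matrix m m ℝ} {B : Matrix n n ℝ}
    (hA : A.PosSemidef) (hB : B.PosSemidef) : (fromBlocks A 0 0 B).PosSemidef := by
  have h₁ := hA.mul_mul_conjTranspose_same (fromRows (1 : Matrix m m ℝ) (0 : Matrix n m ℝ))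
  have h₂ := hB.mul_mul_conjTranspose_same (fromRows (0 : Matrix m n ℝ) (1 : Matrix n n ℝ))
  convert h₁.add h₂ using 1
  ext (i | i) (j | j) <;> simp [transpose_fromRows, mul_fromCols, fromRows_mul]

open scoped MatrixOrder in
/-- With `S = GᴴG` and `G = [G₁ G₂]`, factor `Gᵢ = Qᵢ Aᵢᴴ` with contractions `Qᵢ`; then
`K = Q₁ᴴ Q₂`. -/
theorem PosSemidef.exists_eq_fromBlocks_mul_unitDiagonal_mul {S : Matrix (m ⊕ n) (m ⊕ n) ℝ}
    (hS : S.PosSemidef) :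
    ∃ (A₁ : Matrix m m ℝ) (A₂ : Matrix n n ℝ) (K : Matrix m n ℝ),
      (fromBlocks 1 K Kᴴ 1).PosSemidef ∧
      S = fromBlocks A₁ 0 0 A₂ * fromBlocks 1 K Kᴴ 1 * (fromBlocks A₁ 0 0 A₂)ᴴ := by
  obtain ⟨G, rfl⟩ : ∃ G : Matrix (m ⊕ n) (m ⊕ n) ℝ, S = Gᴴ * G :=
    CStarAlgebra.nonneg_iff_eq_star_mul_self.mp hS.nonneg
  obtain ⟨Q₁, A₁, hG₁, hA₁, hQ₁⟩ := exists_eq_contraction_mul_conjTranspose G.toCols₁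
  obtain ⟨Q₂, A₂, hG₂, hA₂, hQ₂⟩ := exists_eq_contraction_mul_conjTranspose G.toCols₂
  refine ⟨A₁, A₂, Q₁ᴴ * Q₂, ?_, ?_⟩
  · have hY : fromBlocks 1 (Q₁ᴴ * Q₂) (Q₁ᴴ * Q₂)ᴴ 1 = (fromCols Q₁ Q₂)ᴴ * fromCols Q₁ Q₂ +
        fromBlocks (1 - Q₁ᴴ * Q₁) 0 0 (1 - Q₂ᴴ * Q₂) := by
      rw [conjTranspose_fromCols_eq_fromRows_conjTranspose, fromRows_mul_fromCols, fromBlocks_add]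
      simp
    rw [hY]
    exact (posSemidef_conjTranspose_mul_self _).add (hQ₁.fromBlocks_zero_zero hQ₂)
  · have hGG : Gᴴ * G = fromBlocks (G.toCols₁ᴴ * G.toCols₁) (G.toCols₁ᴴ * G.toCols₂)
        (G.toCols₂ᴴ * G.toCols₁) (G.toCols₂ᴴ * G.toCols₂) := by
      conv_lhs => rw [← fromCols_toCols G]
      rw [conjTranspose_fromCols_eq_fromRows_conjTranspose, fromRows_mul_fromCols]
    rw [hGG, fromBlocks_zero_zero_mul_mul_conjTranspose, ← hA₁, ← hA₂, hG₁, hG₂]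
    simp [Matrix.mul_assoc]

/-- Schur complement with respect to the first block:
`[1 K; Kᴴ 1] = [1; Kᴴ] [1 K] + (0 ⊕ (1 - KᴴK))`. -/
theorem PosSemidef.exists_eq_mul_conjTranspose_add_fromBlocks {X : Matrix (m ⊕ n) (m ⊕ n) ℝ}
    (hX : X.PosSemidef) :
    ∃ (Z : Matrix (m ⊕ n) m ℝ) (S : Matrix n n ℝ),
      S.PosSemidef ∧ X = Z * Zᴴ + fromBlocks 0 0 0 S := by
  obtain ⟨A₁, A₂, K, hY, rfl⟩ := hX.exists_eq_fromBlocks_mul_unitDiagonal_mul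
  have hK : (1 - Kᴴ * K).PosSemidef := by
    convert hY.conjTranspose_mul_mul_same (fromRows (-K) 1) using 1
    rw [conjTranspose_fromRows_eq_fromCols_conjTranspose, fromCols_mul_fromBlocks,
      fromCols_mul_fromRows]
    simp [sub_eq_neg_add]
  refine ⟨fromBlocks A₁ 0 0 A₂ * fromRows (1 : Matrix m m ℝ) Kᴴ, A₂ * (1 - Kᴴ * K) * A₂ᴴ,
    hK.mul_mul_conjTranspose_same A₂, ?_⟩
  have hsplit : fromBlocks 1 K Kᴴ 1 = fromRows (1 : Matrix m m ℝ) Kᴴ *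
      (fromRows (1 : Matrix m m ℝ) Kᴴ)ᴴ + fromBlocks 0 0 0 (1 - Kᴴ * K) := by
    rw [conjTranspose_fromRows_eq_fromCols_conjTranspose, fromRows_mul_fromCols, fromBlocks_add]
    simp
  rw [hsplit, Matrix.mul_add, Matrix.add_mul,
    fromBlocks_zero_zero_mul_mul_conjTranspose (Y := fromBlocks 0 0 0 _), conjTranspose_mul]
  simp only [Matrix.mul_assoc, toBlocks_fromBlocks₁₁, toBlocks_fromBlocks₁₂,
    toBlocks_fromBlocks₂₁, toBlocks_fromBlocks₂₂, Matrix.mul_zero, Matrix.zero_mul]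

end BlockFactorizations

section Lift

variable {ν n : Type*} [Fintype ν] [DecidableEq ν] (W : Matrix ν n ℝ)

theorem toBlocks₁₁_fromRows_one_mul_mul (M : Matrix ν ν ℝ) :
    (fromRows (1 : Matrix ν ν ℝ) Wᴴ * M * (fromRows (1 : Matrix ν ν ℝ) Wᴴ)ᴴ).toBlocks₁₁ = M := by
  rw [conjTranspose_fromRows_eq_fromCols_conjTranspose, fromRows_mul, fromRows_mul_fromCols]
  simp

theorem toBlocks₂₂_fromRows_one_mul_mul (M : Matrix ν ν ℝ) :
    (fromRows (1 : Matrix ν ν ℝ) Wᴴ * M * (fromRows (1 : Matrix ν ν ℝ) Wᴴ)ᴴ).toBlocks₂₂ =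
      Wᴴ * M * W := by
  rw [conjTranspose_fromRows_eq_fromCols_conjTranspose, fromRows_mul, fromRows_mul_fromCols]
  simp

variable [Fintype n] [DecidableEq n]

theorem conjTranspose_fromRows_one_mul_fromRows_neg_one :
    (fromRows (1 : Matrix ν ν ℝ) Wᴴ)ᴴ * fromRows W (-1 : Matrix n n ℝ) = 0 := by
  rw [conjTranspose_fromRows_eq_fromCols_conjTranspose, fromCols_mul_fromRows]
  simp

theorem IsHermitian.eq_fromRows_one_mul_toBlocks₁₁_mul {S : Matrix (ν ⊕ n) (ν ⊕ n) ℝ}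
    (hS : S.IsHermitian) (hSW : S * fromRows W (-1 : Matrix n n ℝ) = 0) :
    S = fromRows (1 : Matrix ν ν ℝ) Wᴴ * S.toBlocks₁₁ * (fromRows (1 : Matrix ν ν ℝ) Wᴴ)ᴴ := by
  rw [← fromBlocks_toBlocks S, fromBlocks_mul_fromRows, ← fromRows_zero, fromRows_inj.eq_iff]
    at hSW
  simp only [Matrix.mul_neg, Matrix.mul_one, add_neg_eq_zero] at hSW
  have h₁₁ : S.toBlocks₁₁ᴴ = S.toBlocks₁₁ := hS.submatrix Sum.inl
  have h₂₁ : S.toBlocks₂₁ = Wᴴ * S.toBlocks₁₁ := by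
    rw [← h₁₁, ← conjTranspose_mul, hSW.1]
    ext i j
    exact (hS.apply (Sum.inr i) (Sum.inl j)).symm
  conv_lhs => rw [← fromBlocks_toBlocks S, ← hSW.2, h₂₁, ← hSW.1]
  rw [conjTranspose_fromRows_eq_fromCols_conjTranspose, fromRows_mul, fromRows_mul_fromCols]
  simp [Matrix.mul_assoc]

end Lift

end Matrix

def finSumFinEquivTwoMul (l : ℕ) : Fin l ⊕ Fin l ≃ Fin (2 * l) :=
  finSumFinEquiv.trans (finCongr (two_mul l).symm)

theorem exists_phiFeas_rank_le_phi {l : ℕ} {U : Matrix (Fin (2 * l)) (Fin l) ℝ}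
    {M : Matrix (Fin l) (Fin l) ℝ} (hM : M.IsSymm) (h : ∃ Y, phiFeas l U M Y) :
    ∃ Y, phiFeas l U M Y ∧ Y.rank ≤ phi l :=
  Nat.sInf_mem (s := {k | ∀ U M, M.IsSymm → (∃ Y, phiFeas l U M Y) →
      ∃ Y, phiFeas l U M Y ∧ Y.rank ≤ k})
    ⟨2 * l, fun _ _ _ ⟨Y, hY⟩ => ⟨Y, hY, (rank_le_card_width Y).trans_eq (Fintype.card_fin _)⟩⟩
    U M hM h

theorem phiFeas_submatrix_iff {l : ℕ} {U : Matrix (Fin l ⊕ Fin l) (Fin l) ℝ}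
    {M : Matrix (Fin l) (Fin l) ℝ} {Y : Matrix (Fin l ⊕ Fin l) (Fin l ⊕ Fin l) ℝ} :
    phiFeas l (U.submatrix (finSumFinEquivTwoMul l).symm id) M
        (Y.submatrix (finSumFinEquivTwoMul l).symm (finSumFinEquivTwoMul l).symm) ↔
      Y.PosSemidef ∧ Uᴴ * Y * U = M ∧ Y.toBlocks₁₁ = 1 ∧ Y.toBlocks₂₂ = 1 := by
  set e := finSumFinEquivTwoMul l
  have hl : ∀ (i : Fin l) h, e.symm ⟨i, h⟩ = Sum.inl i := fun i h =>
    e.symm_apply_eq.2 (Fin.ext (by simp [e, finSumFinEquivTwoMul]))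
  have hr : ∀ (i : Fin l) h, e.symm ⟨l + i, h⟩ = Sum.inr i := fun i h =>
    e.symm_apply_eq.2 (Fin.ext (by simp [e, finSumFinEquivTwoMul, add_comm]))
  simp only [phiFeas, posSemidef_submatrix_equiv, transpose_submatrix, submatrix_mul_equiv,
    submatrix_id_id, submatrix_apply, hl, hr, conjTranspose_eq_transpose_of_trivial]
  simp only [← Matrix.ext_iff, toBlocks₁₁, toBlocks₂₂, of_apply, one_apply]

theorem exists_unitDiagonal_rank_le_phi {l : ℕ} (U : Matrix (Fin l ⊕ Fin l) (Fin l) ℝ)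
    {Y₀ : Matrix (Fin l ⊕ Fin l) (Fin l ⊕ Fin l) ℝ} (hY₀ : Y₀.PosSemidef)
    (h₁ : Y₀.toBlocks₁₁ = 1) (h₂ : Y₀.toBlocks₂₂ = 1) :
    ∃ Y : Matrix (Fin l ⊕ Fin l) (Fin l ⊕ Fin l) ℝ, Y.PosSemidef ∧ Uᴴ * Y * U = Uᴴ * Y₀ * U ∧
      Y.toBlocks₁₁ = 1 ∧ Y.toBlocks₂₂ = 1 ∧ Y.rank ≤ phi l := by
  set e := finSumFinEquivTwoMul l
  have hM : (Uᴴ * Y₀ * U).IsSymm :=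
    isHermitian_iff_isSymm.1 (hY₀.conjTranspose_mul_mul_same U).1
  obtain ⟨Y, hY, hrank⟩ :=
    exists_phiFeas_rank_le_phi hM ⟨_, phiFeas_submatrix_iff.2 ⟨hY₀, rfl, h₁, h₂⟩⟩
  have hYe : (Y.submatrix e e).submatrix e.symm e.symm = Y := by
    simp [submatrix_submatrix]
  rw [← hYe, phiFeas_submatrix_iff] at hY
  exact ⟨Y.submatrix e e, hY.1, hY.2.1, hY.2.2.1, hY.2.2.2, by rwa [rank_submatrix]⟩

theorem Matrix.PosSemidef.exists_rank_le_phi {l : ℕ}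
    {S : Matrix (Fin l ⊕ Fin l) (Fin l ⊕ Fin l) ℝ} (hS : S.PosSemidef)
    (W : Matrix (Fin l ⊕ Fin l) (Fin l) ℝ) :
    ∃ T : Matrix (Fin l ⊕ Fin l) (Fin l ⊕ Fin l) ℝ, T.PosSemidef ∧ T.rank ≤ phi l ∧
      T.toBlocks₁₁ = S.toBlocks₁₁ ∧ T.toBlocks₂₂ = S.toBlocks₂₂ ∧ Wᴴ * T * W = Wᴴ * S * W := by
  obtain ⟨A₁, A₂, K, hY₀, rfl⟩ := hS.exists_eq_fromBlocks_mul_unitDiagonal_mul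
  obtain ⟨Y, hY, hYW, h₁, h₂, hrank⟩ :=
    exists_unitDiagonal_rank_le_phi ((fromBlocks A₁ 0 0 A₂)ᴴ * W) hY₀
      (toBlocks_fromBlocks₁₁ _ _ _ _) (toBlocks_fromBlocks₂₂ _ _ _ _)
  refine ⟨fromBlocks A₁ 0 0 A₂ * Y * (fromBlocks A₁ 0 0 A₂)ᴴ, hY.mul_mul_conjTranspose_same _,
    (rank_mul_mul_le _ _ _).trans hrank, ?_, ?_, ?_⟩
  · simp only [fromBlocks_zero_zero_mul_mul_conjTranspose, toBlocks_fromBlocks₁₁, h₁]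
  · simp only [fromBlocks_zero_zero_mul_mul_conjTranspose, toBlocks_fromBlocks₂₂, h₂]
  · rw [conjTranspose_mul, conjTranspose_conjTranspose] at hYW
    simpa only [Matrix.mul_assoc] using hYW

theorem Matrix.PosSemidef.exists_rank_le_phi_of_mul_eq_zero {l : ℕ}
    {S : Matrix ((Fin l ⊕ Fin l) ⊕ Fin l) ((Fin l ⊕ Fin l) ⊕ Fin l) ℝ} (hS : S.PosSemidef)
    (W : Matrix (Fin l ⊕ Fin l) (Fin l) ℝ)
    (hSW : S * fromRows W (-1 : Matrix (Fin l) (Fin l) ℝ) = 0) :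
    ∃ T : Matrix ((Fin l ⊕ Fin l) ⊕ Fin l) ((Fin l ⊕ Fin l) ⊕ Fin l) ℝ,
      T.PosSemidef ∧ T.rank ≤ phi l ∧ T * fromRows W (-1 : Matrix (Fin l) (Fin l) ℝ) = 0 ∧
      T.toBlocks₁₁.toBlocks₁₁ = S.toBlocks₁₁.toBlocks₁₁ ∧
      T.toBlocks₁₁.toBlocks₂₂ = S.toBlocks₁₁.toBlocks₂₂ ∧ T.toBlocks₂₂ = S.toBlocks₂₂ := by
  set J := fromRows (1 : Matrix (Fin l ⊕ Fin l) (Fin l ⊕ Fin l) ℝ) Wᴴ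
  have hS₁₁ : S.toBlocks₁₁.PosSemidef := hS.submatrix Sum.inl
  obtain ⟨T, hT, hrank, h₁, h₂, hW⟩ := hS₁₁.exists_rank_le_phi W
  refine ⟨J * T * Jᴴ, hT.mul_mul_conjTranspose_same J, (rank_mul_mul_le _ _ _).trans hrank,
    ?_, ?_, ?_, ?_⟩
  · rw [Matrix.mul_assoc, conjTranspose_fromRows_one_mul_fromRows_neg_one, Matrix.mul_zero]
  · rw [toBlocks₁₁_fromRows_one_mul_mul, h₁]
  · rw [toBlocks₁₁_fromRows_one_mul_mul, h₂]
  · conv_rhs => rw [hS.1.eq_fromRows_one_mul_toBlocks₁₁_mul W hSW]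
    rw [toBlocks₂₂_fromRows_one_mul_mul, toBlocks₂₂_fromRows_one_mul_mul, hW]

def blockU {α ν κ : Type*} [DecidableEq κ] (V : Matrix α κ ℝ) (W : Matrix ν κ ℝ) :
    Matrix (α ⊕ (ν ⊕ κ)) κ ℝ :=
  fromRows V (fromRows W (-1 : Matrix κ κ ℝ))

theorem Matrix.PosSemidef.exists_add_fromBlocks_rank_le {α : Type*} [Fintype α] [DecidableEq α]
    {l : ℕ} (V : Matrix α (Fin l) ℝ) (W : Matrix (Fin l ⊕ Fin l) (Fin l) ℝ)
    {X : Matrix (α ⊕ ((Fin l ⊕ Fin l) ⊕ Fin l)) (α ⊕ ((Fin l ⊕ Fin l) ⊕ Fin l)) ℝ}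
    (hX : X.PosSemidef) (hXU : (blockU V W)ᴴ * X * blockU V W = 0) :
    ∃ Δ : Matrix ((Fin l ⊕ Fin l) ⊕ Fin l) ((Fin l ⊕ Fin l) ⊕ Fin l) ℝ,
      Δ.toBlocks₁₁.toBlocks₁₁ = 0 ∧ Δ.toBlocks₁₁.toBlocks₂₂ = 0 ∧ Δ.toBlocks₂₂ = 0 ∧
      (X + fromBlocks (0 : Matrix α α ℝ) 0 0 Δ).PosSemidef ∧
      (blockU V W)ᴴ * (X + fromBlocks (0 : Matrix α α ℝ) 0 0 Δ) * blockU V W = 0 ∧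
      (X + fromBlocks (0 : Matrix α α ℝ) 0 0 Δ).rank ≤ Fintype.card α + phi l := by
  obtain ⟨Z, S, hS, rfl⟩ := hX.exists_eq_mul_conjTranspose_add_fromBlocks
  set E := fromRows W (-1 : Matrix (Fin l) (Fin l) ℝ)
  rw [Matrix.mul_add, Matrix.add_mul, blockU, conjTranspose_fromRows_mul_fromBlocks_zero_mul]
    at hXU
  have hZ : (fromRows V E)ᴴ * (Z * Zᴴ) * fromRows V E = 0 :=
    ((posSemidef_self_mul_conjTranspose Z).conjTranspose_mul_mul_same _).eq_zero_of_add_eq_zero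
      (hS.conjTranspose_mul_mul_same _) hXU
  rw [hZ, zero_add] at hXU
  obtain ⟨T, hT, hrank, hTW, h₁, h₂, h₃⟩ := hS.exists_rank_le_phi_of_mul_eq_zero W
    (hS.mul_eq_zero_of_conjTranspose_mul_mul_eq_zero hXU)
  have hX' : Z * Zᴴ + fromBlocks 0 0 0 S + fromBlocks 0 0 0 (T - S) =
      Z * Zᴴ + fromBlocks 0 0 0 T := by
    rw [add_assoc, fromBlocks_add]
    simp
  refine ⟨T - S, sub_eq_zero.2 h₁, sub_eq_zero.2 h₂, sub_eq_zero.2 h₃, ?_, ?_, ?_⟩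
  · rw [hX']
    exact (posSemidef_self_mul_conjTranspose Z).add (PosSemidef.zero.fromBlocks_zero_zero hT)
  · rw [hX', Matrix.mul_add, Matrix.add_mul, blockU, hZ,
      conjTranspose_fromRows_mul_fromBlocks_zero_mul, Matrix.mul_assoc, hTW, Matrix.mul_zero,
      zero_add]
  · rw [hX']
    exact (rank_add_le _ _).trans (add_le_add
      ((rank_mul_le_left _ _).trans (rank_le_card_width Z))
      ((rank_fromBlocks_zero_zero_zero_le T).trans hrank))

section Reindex

def blockEquiv (p l : ℕ) : Fin p ⊕ ((Fin l ⊕ Fin l) ⊕ Fin l) ≃ Fin (p + 3 * l) :=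
  (Equiv.sumCongr (Equiv.refl _)
    ((Equiv.sumCongr finSumFinEquiv (Equiv.refl _)).trans finSumFinEquiv)).trans
    (finSumFinEquiv.trans (finCongr (by ring)))

variable {p l : ℕ}

theorem blockEquiv_symm_mk (i : Fin p) (h : (i : ℕ) < p + 3 * l) :
    (blockEquiv p l).symm ⟨i, h⟩ = Sum.inl i :=
  (Equiv.symm_apply_eq _).2 (Fin.ext (by simp [blockEquiv]))

theorem blockEquiv_symm_mk_add (i : Fin l) (h : p + (i : ℕ) < p + 3 * l) :
    (blockEquiv p l).symm ⟨p + i, h⟩ = Sum.inr (Sum.inl (Sum.inl i)) :=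
  (Equiv.symm_apply_eq _).2 (Fin.ext (by simp [blockEquiv]))

theorem blockEquiv_symm_mk_add_add (i : Fin l) (h : p + l + (i : ℕ) < p + 3 * l) :
    (blockEquiv p l).symm ⟨p + l + i, h⟩ = Sum.inr (Sum.inl (Sum.inr i)) :=
  (Equiv.symm_apply_eq _).2 (Fin.ext (by simp [blockEquiv]; omega))

theorem blockEquiv_symm_mk_add_two_mul_add (i : Fin l) (h : p + 2 * l + (i : ℕ) < p + 3 * l) :
    (blockEquiv p l).symm ⟨p + 2 * l + i, h⟩ = Sum.inr (Sum.inr i) :=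
  (Equiv.symm_apply_eq _).2 (Fin.ext (by simp [blockEquiv]; omega))

theorem Umat_eq_submatrix (V : Matrix (Fin p) (Fin l) ℝ) :
    Umat p l V = (blockU V (fromRows (1 : Matrix (Fin l) (Fin l) ℝ)
      (1 : Matrix (Fin l) (Fin l) ℝ))).submatrix (blockEquiv p l).symm id := by
  ext x j
  obtain ⟨y, rfl⟩ := (blockEquiv p l).surjective x
  simp only [submatrix_apply, Equiv.symm_apply_apply, id]
  rcases y with a | (i | i) | i <;> simp [Umat, blockU, blockEquiv, one_apply, Fin.ext_iff]
  all_goals have := i.isLt; have := j.isLt; split_ifs <;> first | omega | norm_num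

theorem Umat_transpose_mul_submatrix_mul (V : Matrix (Fin p) (Fin l) ℝ)
    (Y : Matrix (Fin p ⊕ ((Fin l ⊕ Fin l) ⊕ Fin l)) (Fin p ⊕ ((Fin l ⊕ Fin l) ⊕ Fin l)) ℝ) :
    (Umat p l V)ᵀ * Y.submatrix (blockEquiv p l).symm (blockEquiv p l).symm * Umat p l V =
      (blockU V (fromRows (1 : Matrix (Fin l) (Fin l) ℝ) (1 : Matrix (Fin l) (Fin l) ℝ)))ᴴ * Y *
        blockU V (fromRows (1 : Matrix (Fin l) (Fin l) ℝ) (1 : Matrix (Fin l) (Fin l) ℝ)) := by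
  rw [Umat_eq_submatrix, transpose_submatrix, submatrix_mul_equiv, submatrix_mul_equiv,
    submatrix_id_id, conjTranspose_eq_transpose_of_trivial]

theorem Sfeas.of_submatrix_eq_add_fromBlocks {V : Matrix (Fin p) (Fin l) ℝ}
    {B : Matrix (Fin p) (Fin p) ℝ} {C : Matrix (Fin (3 * l)) (Fin p) ℝ}
    {M1 M2 M3 : Matrix (Fin l) (Fin l) ℝ} {X Y : Matrix (Fin (p + 3 * l)) (Fin (p + 3 * l)) ℝ}
    (hX : Sfeas p l V B C M1 M2 M3 X) (hY : Y.PosSemidef) (hYU : (Umat p l V)ᵀ * Y * Umat p l V = 0)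
    {Δ : Matrix ((Fin l ⊕ Fin l) ⊕ Fin l) ((Fin l ⊕ Fin l) ⊕ Fin l) ℝ}
    (hXY : Y.submatrix (blockEquiv p l) (blockEquiv p l) =
      X.submatrix (blockEquiv p l) (blockEquiv p l) + fromBlocks 0 0 0 Δ)
    (h₁ : Δ.toBlocks₁₁.toBlocks₁₁ = 0) (h₂ : Δ.toBlocks₁₁.toBlocks₂₂ = 0)
    (h₃ : Δ.toBlocks₂₂ = 0) :
    Sfeas p l V B C M1 M2 M3 Y := by
  obtain ⟨-, hB, hC, hM1, hM2, hM3, -⟩ := hX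
  set e := blockEquiv p l
  have hentry : ∀ x y, Y x y = X x y + fromBlocks (0 : Matrix (Fin p) (Fin p) ℝ) 0 0 Δ
      (e.symm x) (e.symm y) := fun x y => by
    simpa using congrFun (congrFun hXY (e.symm x)) (e.symm y)
  have hcol : ∀ x (j : Fin p),
      fromBlocks (0 : Matrix (Fin p) (Fin p) ℝ) 0 0 Δ (e.symm x) (Sum.inl j) = 0 := by
    intro x j
    rcases e.symm x with _ | _ <;> rfl
  refine ⟨hY, fun i j => ?_, fun i j => ?_, fun i j => ?_, fun i j => ?_, fun i j => ?_, hYU⟩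
  · rw [hentry, blockEquiv_symm_mk j, hcol, add_zero, hB]
  · rw [hentry, blockEquiv_symm_mk j, hcol, add_zero, hC]
  · rw [hentry, blockEquiv_symm_mk_add i, blockEquiv_symm_mk_add j, hM1, fromBlocks_apply₂₂,
      add_eq_left]
    exact congrFun (congrFun h₁ i) j
  · rw [hentry, blockEquiv_symm_mk_add_add i, blockEquiv_symm_mk_add_add j, hM2,
      fromBlocks_apply₂₂, add_eq_left]
    exact congrFun (congrFun h₂ i) j
  · rw [hentry, blockEquiv_symm_mk_add_two_mul_add i, blockEquiv_symm_mk_add_two_mul_add j, hM3,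
      fromBlocks_apply₂₂, add_eq_left]
    exact congrFun (congrFun h₃ i) j

end Reindex

theorem Sfeas_exists_low_rank_general (p l : ℕ)
    (V : Matrix (Fin p) (Fin l) ℝ)
    (B : Matrix (Fin p) (Fin p) ℝ)
    (C : Matrix (Fin (3*l)) (Fin p) ℝ)
    (M1 M2 M3 : Matrix (Fin l) (Fin l) ℝ)
    (h : ∃ X, Sfeas p l V B C M1 M2 M3 X) :
    ∃ X, Sfeas p l V B C M1 M2 M3 X ∧ X.rank ≤ p + phi l := by
  obtain ⟨X, hX⟩ := h
  set e := blockEquiv p l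
  have hXU := hX.2.2.2.2.2.2
  rw [show X = (X.submatrix e e).submatrix e.symm e.symm by simp [submatrix_submatrix],
    Umat_transpose_mul_submatrix_mul] at hXU
  obtain ⟨Δ, h₁, h₂, h₃, hPSD, hU, hrank⟩ :=
    (hX.1.submatrix e).exists_add_fromBlocks_rank_le V _ hXU
  refine ⟨(X.submatrix e e + fromBlocks 0 0 0 Δ).submatrix e.symm e.symm,
    hX.of_submatrix_eq_add_fromBlocks (hPSD.submatrix _)
      (by rwa [Umat_transpose_mul_submatrix_mul]) (by simp [e, submatrix_submatrix]) h₁ h₂ h₃, ?_⟩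
  rw [rank_submatrix]
  simpa using hrank

/-- `𝒮` is either empty or contains an element of rank at most `p + φ(ℓ)`. -/
theorem Sfeas_exists_low_rank (p l : ℕ) (hl : 1 ≤ l)
    (V : Matrix (Fin p) (Fin l) ℝ)
    (B : Matrix (Fin p) (Fin p) ℝ) (hB : B.IsSymm)
    (C : Matrix (Fin (3*l)) (Fin p) ℝ)
    (M1 M2 M3 : Matrix (Fin l) (Fin l) ℝ)
    (hM1 : M1.IsSymm) (hM2 : M2.IsSymm) (hM3 : M3.IsSymm)
    (h : ∃ X, Sfeas p l V B C M1 M2 M3 X) :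
    ∃ X, Sfeas p l V B C M1 M2 M3 X ∧ X.rank ≤ p + phi l :=
  Sfeas_exists_low_rank_general p l V B C M1 M2 M3 h
end
end

section
/- Let ℓ ≥ 1, let U be a real 2ℓ×ℓ matrix, and let M be a real symmetric ℓ×ℓ matrix. If there exists a real symmetric positive semidefinite 2ℓ×2ℓ matrix Y with UᵀYU = M, Y_{1:ℓ,1:ℓ} = I_ℓ and Y_{ℓ+1:2ℓ,ℓ+1:2ℓ} = I_ℓ, then there exists such a matrix Y whose rank is at most ⌊(√(12ℓ(ℓ+1)+1) − 1)/2⌋. -/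
/-!
Barvinok–Pataki rank reduction. Write a feasible `Y` of rank `r` as `W Wᵀ` with `W` of size
`2ℓ × r`. The perturbations `W Δ Wᵀ` with `Δ` symmetric `r × r` form a space of dimension
`r(r+1)/2`, while the constraints of `phiFeas` only see the `3ℓ(ℓ+1)/2` independent entries of
three symmetric `ℓ × ℓ` matrices. So if `r(r+1) > 3ℓ(ℓ+1)`, some symmetric `Δ ≠ 0` leaves every
constraint unchanged, and for a suitable `t` the matrix `I + tΔ` is positive semidefinite and
singular: `W (I + tΔ) Wᵀ` is feasible of smaller rank. Iterating ends with `r(r+1) ≤ 3ℓ(ℓ+1)`,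
that is `r ≤ (√(12ℓ(ℓ+1)+1) − 1)/2`.
-/

open Matrix

noncomputable section

open Module

namespace Matrix

variable {n R : Type*}

def ofSym2 [CommSemiring R] : (Sym2 n → R) →ₗ[R] Matrix n n R where
  toFun c := of fun i j => c s(i, j)
  map_add' _ _ := rfl
  map_smul' _ _ := rfl

@[simp]
lemma ofSym2_apply [CommSemiring R] (c : Sym2 n → R) (i j : n) : ofSym2 c i j = c s(i, j) :=
  rfl

lemma isSymm_ofSym2 [CommSemiring R] (c : Sym2 n → R) : (ofSym2 c).IsSymm :=
  IsSymm.ext fun i j => by rw [ofSym2_apply, ofSym2_apply, Sym2.eq_swap]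

lemma ofSym2_injective [CommSemiring R] :
    Function.Injective (ofSym2 : (Sym2 n → R) →ₗ[R] Matrix n n R) := by
  intro c c' h
  funext z
  induction z using Sym2.ind with
  | h i j => exact congrFun (congrFun h i) j

def toSym2 [CommSemiring R] : Matrix n n R →ₗ[R] Sym2 n → R where
  toFun A := Sym2.lift ⟨fun i j => A i j + A j i, fun _ _ => add_comm _ _⟩
  map_add' A B := by
    funext z
    induction z using Sym2.ind
    simp only [Sym2.lift_mk, add_apply, Pi.add_apply]
    ring
  map_smul' t A := by
    funext z
    induction z using Sym2.ind
    simp only [Sym2.lift_mk, smul_apply, smul_eq_mul, RingHom.id_apply, Pi.smul_apply]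
    ring

@[simp]
lemma toSym2_mk [CommSemiring R] (A : Matrix n n R) (i j : n) : toSym2 A s(i, j) = A i j + A j i :=
  rfl

lemma IsSymm.eq_of_toSym2_eq [CommRing R] [NoZeroDivisors R] [CharZero R] {A B : Matrix n n R}
    (hA : A.IsSymm) (hB : B.IsSymm) (h : toSym2 A = toSym2 B) : A = B := by
  ext i j
  have hij := congrFun h s(i, j)
  rw [toSym2_mk, toSym2_mk, hA.apply i j, hB.apply i j, ← two_mul, ← two_mul] at hij
  exact mul_left_cancel₀ two_ne_zero hij

lemma two_mul_card_sym2 [Fintype n] :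
    2 * Fintype.card (Sym2 n) = Fintype.card n * (Fintype.card n + 1) := by
  rw [Sym2.card, Nat.choose_two_right, Nat.mul_div_cancel' (Nat.even_mul_pred_self _).two_dvd]
  simp [mul_comm]

lemma exists_isSymm_ne_zero_map_eq_zero {K V : Type*} [Field K] [AddCommGroup V] [Module K V]
    [FiniteDimensional K V] [Fintype n] (Φ : Matrix n n K →ₗ[K] V)
    (h : 2 * finrank K V < Fintype.card n * (Fintype.card n + 1)) :
    ∃ Δ, Δ ≠ 0 ∧ Δ.IsSymm ∧ Φ Δ = 0 := by
  have hdim : finrank K V < finrank K (Sym2 n → K) := by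
    rw [finrank_fintype_fun_eq_card]
    have := two_mul_card_sym2 (n := n)
    omega
  obtain ⟨c, hc, hc0⟩ := Submodule.exists_mem_ne_zero_of_ne_bot
    (LinearMap.ker_ne_bot_of_finrank_lt (f := Φ ∘ₗ ofSym2) hdim)
  exact ⟨ofSym2 c, (map_ne_zero_iff _ ofSym2_injective).2 hc0, isSymm_ofSym2 c, hc⟩

lemma PosSemidef.isSymm {Y : Matrix n n ℝ} (hY : Y.PosSemidef) : Y.IsSymm :=
  isHermitian_iff_isSymm.1 hY.isHermitian

variable [Fintype n] [DecidableEq n]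

lemma IsHermitian.eq_mul_diagonal_mul_transpose {A : Matrix n n ℝ} (hA : A.IsHermitian) :
    A = (hA.eigenvectorUnitary : Matrix n n ℝ) * diagonal hA.eigenvalues *
      (hA.eigenvectorUnitary : Matrix n n ℝ)ᵀ := by
  conv_lhs => rw [hA.spectral_theorem]
  simp [Unitary.conjStarAlgAut_apply, Matrix.star_eq_conjTranspose]

lemma IsHermitian.exists_posSemidef_one_add_smul_rank_lt {Δ : Matrix n n ℝ} (hΔ : Δ.IsHermitian)
    (hΔ0 : Δ ≠ 0) : ∃ t : ℝ, (1 + t • Δ).PosSemidef ∧ (1 + t • Δ).rank < Fintype.card n := by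
  set d := hΔ.eigenvalues
  set P : Matrix n n ℝ := ↑hΔ.eigenvectorUnitary
  have hPP : P * Pᵀ = 1 := by
    simpa [P, star_eq_conjTranspose] using mem_unitaryGroup_iff.1 hΔ.eigenvectorUnitary.2
  have hspec (t : ℝ) : 1 + t • Δ = P * diagonal (fun i => 1 + t * d i) * Pᵀ := by
    have hdiag : diagonal (fun i => 1 + t * d i) = 1 + t • diagonal d := by
      rw [← diagonal_one, ← diagonal_smul, diagonal_add]; rfl
    rw [hdiag, mul_add, add_mul, mul_one, hPP, Matrix.mul_smul, Matrix.smul_mul,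
      ← hΔ.eq_mul_diagonal_mul_transpose]
  obtain ⟨i, hi⟩ : ∃ i, d i ≠ 0 :=
    Function.ne_iff.1 fun h => hΔ0 (hΔ.eigenvalues_eq_zero_iff.1 h)
  have : Nonempty n := ⟨i⟩
  obtain ⟨i₀, hi₀⟩ := Finite.exists_max (|d ·|)
  have hd₀ : d i₀ ≠ 0 := fun h => hi (by simpa [h] using hi₀ i)
  -- the largest eigenvalue in absolute value is sent to zero, and the others stay nonnegative
  refine ⟨-(d i₀)⁻¹, ?_, ?_⟩ <;> rw [hspec]
  · have hw (j : n) : 0 ≤ 1 + -(d i₀)⁻¹ * d j := by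
      have : d j / d i₀ ≤ 1 := (le_abs_self _).trans (by
        rw [abs_div]; exact div_le_one_of_le₀ (hi₀ j) (abs_nonneg _))
      rw [neg_mul, ← div_eq_inv_mul]; linarith
    simpa using (posSemidef_diagonal_iff.2 hw).mul_mul_conjTranspose_same P
  · calc (P * diagonal (fun i => 1 + -(d i₀)⁻¹ * d i) * Pᵀ).rank
        ≤ (diagonal (fun i => 1 + -(d i₀)⁻¹ * d i)).rank :=
          (rank_mul_le_left _ _).trans (rank_mul_le_right _ _)
      _ < Fintype.card n := by
        rw [rank_diagonal]
        exact Fintype.card_subtype_lt (x := i₀) (by simp [hd₀])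

lemma PosSemidef.exists_mul_transpose_eq {Y : Matrix n n ℝ} (hY : Y.PosSemidef) :
    ∃ W : Matrix n (Fin Y.rank) ℝ, W * Wᵀ = Y := by
  set ev := hY.isHermitian.eigenvalues
  set P : Matrix n n ℝ := ↑hY.isHermitian.eigenvectorUnitary
  let e : {k // ev k ≠ 0} ≃ Fin Y.rank :=
    Fintype.equivFinOfCardEq hY.isHermitian.rank_eq_card_non_zero_eigs.symm
  refine ⟨of fun i k => P i (e.symm k) * √(ev (e.symm k)), ?_⟩
  conv_rhs => rw [hY.isHermitian.eq_mul_diagonal_mul_transpose]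
  ext i j
  have hsq (k : n) : √(ev k) * √(ev k) = ev k := Real.mul_self_sqrt (hY.eigenvalues_nonneg k)
  rw [mul_apply, mul_apply]
  simp only [of_apply, transpose_apply, mul_diagonal]
  rw [e.symm.sum_comp (fun k => P i k * √(ev k) * (P j k * √(ev k))),
    ← Finset.sum_subtype {k | ev k ≠ 0} (fun k => by simp)
      (fun k => P i k * √(ev k) * (P j k * √(ev k))),
    Finset.sum_filter_of_ne (p := fun k => ev k ≠ 0) fun k _ hk h0 => hk (by simp [h0])]
  exact Finset.sum_congr rfl fun k _ => by linear_combination P i k * P j k * hsq k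

variable {V : Type*} [AddCommGroup V] [Module ℝ V] [FiniteDimensional ℝ V]

theorem PosSemidef.exists_rank_lt_of_finrank_lt (G : Matrix n n ℝ →ₗ[ℝ] V) {Y : Matrix n n ℝ}
    (hY : Y.PosSemidef) (h : 2 * finrank ℝ V < Y.rank * (Y.rank + 1)) :
    ∃ Y', Y'.PosSemidef ∧ G Y' = G Y ∧ Y'.rank < Y.rank := by
  obtain ⟨W, hW⟩ := hY.exists_mul_transpose_eq
  let congrW : Matrix (Fin Y.rank) (Fin Y.rank) ℝ →ₗ[ℝ] Matrix n n ℝ :=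
    { toFun A := W * A * Wᵀ
      map_add' A B := by rw [Matrix.mul_add, Matrix.add_mul]
      map_smul' t A := by rw [Matrix.mul_smul, Matrix.smul_mul]; rfl }
  obtain ⟨Δ, hΔ0, hΔ, hGΔ⟩ :=
    exists_isSymm_ne_zero_map_eq_zero (G ∘ₗ congrW) (by rwa [Fintype.card_fin])
  obtain ⟨t, hpsd, hrank⟩ :=
    (isHermitian_iff_isSymm.2 hΔ).exists_posSemidef_one_add_smul_rank_lt hΔ0
  have hY' : W * (1 + t • Δ) * Wᵀ = Y + t • (W * Δ * Wᵀ) := by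
    rw [Matrix.mul_add, Matrix.add_mul, Matrix.mul_one, hW, Matrix.mul_smul, Matrix.smul_mul]
  refine ⟨W * (1 + t • Δ) * Wᵀ, ?_, ?_, ?_⟩
  · simpa using hpsd.mul_mul_conjTranspose_same W
  · rw [hY', map_add, map_smul, show G (W * Δ * Wᵀ) = 0 from hGΔ, smul_zero, add_zero]
  · calc (W * (1 + t • Δ) * Wᵀ).rank ≤ (1 + t • Δ).rank :=
          (rank_mul_le_left _ _).trans (rank_mul_le_right _ _)
      _ < Y.rank := hrank.trans_eq (Fintype.card_fin _)

theorem PosSemidef.exists_rank_mul_rank_add_one_le (G : Matrix n n ℝ →ₗ[ℝ] V)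
    {Y : Matrix n n ℝ} (hY : Y.PosSemidef) :
    ∃ Y', Y'.PosSemidef ∧ G Y' = G Y ∧ Y'.rank * (Y'.rank + 1) ≤ 2 * finrank ℝ V := by
  induction hr : Y.rank using Nat.strong_induction_on generalizing Y with
  | _ r ih =>
    by_cases h : Y.rank * (Y.rank + 1) ≤ 2 * finrank ℝ V
    · exact ⟨Y, hY, rfl, h⟩
    · obtain ⟨Z, hZ, hGZ, hlt⟩ := hY.exists_rank_lt_of_finrank_lt G (not_le.1 h)
      obtain ⟨Y', hY', hGY', hrank⟩ := ih Z.rank (hr ▸ hlt) hZ rfl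
      exact ⟨Y', hY', hGY'.trans hGZ, hrank⟩

end Matrix

section Feasibility

variable {l : ℕ}

def topIndex (i : Fin l) : Fin (2 * l) := ⟨i, by omega⟩

def bottomIndex (i : Fin l) : Fin (2 * l) := ⟨l + i, by omega⟩

def phiFeasConstraints (U : Matrix (Fin (2 * l)) (Fin l) ℝ) :
    Matrix (Fin (2 * l)) (Fin (2 * l)) ℝ →ₗ[ℝ]
      (Sym2 (Fin l) → ℝ) × (Sym2 (Fin l) → ℝ) × (Sym2 (Fin l) → ℝ) where
  toFun Z := (toSym2 (Uᵀ * Z * U), toSym2 (Z.submatrix topIndex topIndex),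
    toSym2 (Z.submatrix bottomIndex bottomIndex))
  map_add' Z Z' := by simp only [Matrix.mul_add, Matrix.add_mul, submatrix_add, Pi.add_apply,
    map_add, Prod.mk_add_mk]
  map_smul' t Z := by simp only [Matrix.mul_smul, Matrix.smul_mul, submatrix_smul,
    Pi.smul_apply, map_smul, RingHom.id_apply, Prod.smul_mk]

lemma two_mul_finrank_phiFeasConstraints_codomain :
    2 * finrank ℝ ((Sym2 (Fin l) → ℝ) × (Sym2 (Fin l) → ℝ) × (Sym2 (Fin l) → ℝ)) =
      3 * (l * (l + 1)) := by
  have := two_mul_card_sym2 (n := Fin l)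
  simp only [finrank_prod, finrank_fintype_fun_eq_card, Fintype.card_fin] at this ⊢
  omega

lemma phiFeas_of_phiFeasConstraints_eq {U : Matrix (Fin (2 * l)) (Fin l) ℝ}
    {M : Matrix (Fin l) (Fin l) ℝ} {Y Y' : Matrix (Fin (2 * l)) (Fin (2 * l)) ℝ}
    (hY : phiFeas l U M Y) (hY' : Y'.PosSemidef)
    (h : phiFeasConstraints U Y' = phiFeasConstraints U Y) : phiFeas l U M Y' := by
  obtain ⟨hpsd, hM, htop, hbot⟩ := hY
  simp only [phiFeasConstraints, LinearMap.coe_mk, AddHom.coe_mk, Prod.mk.injEq] at h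
  obtain ⟨hU, hT, hB⟩ := h
  have hUsymm {Z : Matrix (Fin (2 * l)) (Fin (2 * l)) ℝ} (hZ : Z.PosSemidef) :
      (Uᵀ * Z * U).IsSymm := by
    simpa using (hZ.conjTranspose_mul_mul_same U).isSymm
  refine ⟨hY', ?_, fun i j => ?_, fun i j => ?_⟩
  · rw [← hM]
    exact (hUsymm hY').eq_of_toSym2_eq (hUsymm hpsd) hU
  · rw [← htop]
    exact congrFun₂ ((hY'.isSymm.submatrix _).eq_of_toSym2_eq (hpsd.isSymm.submatrix _) hT) i j
  · rw [← hbot]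
    exact congrFun₂ ((hY'.isSymm.submatrix _).eq_of_toSym2_eq (hpsd.isSymm.submatrix _) hB) i j

end Feasibility

lemma natCast_le_floor_of_mul_add_one_le {r : ℕ} {x : ℝ} (h : (r : ℝ) * (r + 1) ≤ x) :
    (r : ℤ) ≤ ⌊(√(4 * x + 1) - 1) / 2⌋ := by
  have hx : 0 ≤ 4 * x + 1 := by nlinarith [(r.cast_nonneg : (0 : ℝ) ≤ r)]
  rw [Int.le_floor, Int.cast_natCast, le_div_iff₀ two_pos, le_sub_iff_add_le,
    Real.le_sqrt (by positivity) hx]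
  nlinarith

theorem phiFeas_exists_low_rank_general (l : ℕ)
    (U : Matrix (Fin (2*l)) (Fin l) ℝ)
    (M : Matrix (Fin l) (Fin l) ℝ)
    (h : ∃ Y, phiFeas l U M Y) :
    ∃ Y, phiFeas l U M Y ∧
      (Y.rank : ℤ) ≤ ⌊(Real.sqrt (12 * (l : ℝ) * ((l : ℝ) + 1) + 1) - 1) / 2⌋ := by
  obtain ⟨Y, hY⟩ := h
  obtain ⟨Y', hY'psd, hG, hrank⟩ :=
    hY.1.exists_rank_mul_rank_add_one_le (phiFeasConstraints U)
  rw [two_mul_finrank_phiFeasConstraints_codomain] at hrank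
  refine ⟨Y', phiFeas_of_phiFeasConstraints_eq hY hY'psd hG, ?_⟩
  rw [show 12 * (l : ℝ) * (l + 1) = 4 * (3 * (l * (l + 1)) : ℕ) by push_cast; ring]
  exact natCast_le_floor_of_mul_add_one_le (by exact_mod_cast hrank)

/-- If the feasible set is nonempty, it contains an element of rank at most
`⌊(√(12ℓ(ℓ+1)+1) − 1)/2⌋`. -/
theorem phiFeas_exists_low_rank (l : ℕ) (hl : 1 ≤ l)
    (U : Matrix (Fin (2*l)) (Fin l) ℝ)
    (M : Matrix (Fin l) (Fin l) ℝ) (hM : M.IsSymm)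
    (h : ∃ Y, phiFeas l U M Y) :
    ∃ Y, phiFeas l U M Y ∧
      (Y.rank : ℤ) ≤ ⌊(Real.sqrt (12 * (l : ℝ) * ((l : ℝ) + 1) + 1) - 1) / 2⌋ :=
  phiFeas_exists_low_rank_general l U M h
end
end

section
/- Let ℓ ≥ 1 and let M₁, M₂, M₃ be real symmetric positive semidefinite ℓ×ℓ matrices such that B(M₁,M₂,M₃) is nonempty. Then the feasible set F(M₁,M₂,M₃) is nonempty. -/
/-!
Given `Y ∈ B(M₁,M₂,M₃)`, take `X = [[I, P], [P, I + Y]]` with `P = diag(I_ℓ, I_ℓ, −I_ℓ)`.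
Since `P² = I`, the Schur complement of the identity block is `I + Y − P² = Y ⪰ 0`, so `X ⪰ 0`,
and the prescribed blocks of `X` are those of `I`, `P` and `I + Y`. With `W = [I; I; −I]` we have
`P W = [I; I; I]`, so `V = [−P W; W]` and `Vᵀ X V = Wᵀ Y W = 0`.
-/

open Matrix

noncomputable section

/-- The `3ℓ×ℓ` block matrix `[I_ℓ; I_ℓ; −I_ℓ]`. -/
def Wmat (l : ℕ) : Matrix (Fin (3*l)) (Fin l) ℝ :=
  Matrix.of fun i j =>
    (if (i : ℕ) = (j : ℕ) then 1 else 0) + (if (i : ℕ) = l + (j : ℕ) then 1 else 0)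
      - (if (i : ℕ) = 2*l + (j : ℕ) then 1 else 0)

/-- Membership in the set `B(M₁,M₂,M₃)`. -/
def Bset (l : ℕ) (M1 M2 M3 : Matrix (Fin l) (Fin l) ℝ)
    (X : Matrix (Fin (3*l)) (Fin (3*l)) ℝ) : Prop :=
  X.PosSemidef ∧
  (∀ i j : Fin l, X ⟨(i : ℕ), by omega⟩ ⟨(j : ℕ), by omega⟩ = M1 i j) ∧
  (∀ i j : Fin l, X ⟨l + (i : ℕ), by omega⟩ ⟨l + (j : ℕ), by omega⟩ = M2 i j) ∧
  (∀ i j : Fin l, X ⟨2*l + (i : ℕ), by omega⟩ ⟨2*l + (j : ℕ), by omega⟩ = M3 i j) ∧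
  (Wmat l)ᵀ * X * (Wmat l) = 0

/-- The `6ℓ×ℓ` block matrix `V = [−I_ℓ; −I_ℓ; −I_ℓ; I_ℓ; I_ℓ; −I_ℓ]`. -/
def Vmat (l : ℕ) : Matrix (Fin (6*l)) (Fin l) ℝ :=
  Matrix.of fun i j =>
    -(if (i : ℕ) = (j : ℕ) then 1 else 0) - (if (i : ℕ) = l + (j : ℕ) then 1 else 0)
    - (if (i : ℕ) = 2*l + (j : ℕ) then 1 else 0) + (if (i : ℕ) = 3*l + (j : ℕ) then 1 else 0)
    + (if (i : ℕ) = 4*l + (j : ℕ) then 1 else 0) - (if (i : ℕ) = 5*l + (j : ℕ) then 1 else 0)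

/-- Membership in the feasible set `F(M₁,M₂,M₃)`. -/
def Fset (l : ℕ) (M1 M2 M3 : Matrix (Fin l) (Fin l) ℝ)
    (X : Matrix (Fin (6*l)) (Fin (6*l)) ℝ) : Prop :=
  X.PosSemidef ∧
  (∀ i j : Fin (3*l), X ⟨(i : ℕ), by omega⟩ ⟨(j : ℕ), by omega⟩ = if i = j then (1:ℝ) else 0) ∧
  (∀ (i : Fin l) (j : Fin (2*l)), X ⟨3*l + (i : ℕ), by omega⟩ ⟨l + (j : ℕ), by omega⟩ = 0) ∧
  (∀ i j : Fin l, X ⟨4*l + (i : ℕ), by omega⟩ ⟨(j : ℕ), by omega⟩ = 0) ∧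
  (∀ i j : Fin l, X ⟨4*l + (i : ℕ), by omega⟩ ⟨2*l + (j : ℕ), by omega⟩ = 0) ∧
  (∀ (i : Fin l) (j : Fin (2*l)), X ⟨5*l + (i : ℕ), by omega⟩ ⟨(j : ℕ), by omega⟩ = 0) ∧
  (∀ i j : Fin l, X ⟨3*l + (i : ℕ), by omega⟩ ⟨3*l + (j : ℕ), by omega⟩
      = (if i = j then (1:ℝ) else 0) + M1 i j) ∧
  (∀ i j : Fin l, X ⟨4*l + (i : ℕ), by omega⟩ ⟨4*l + (j : ℕ), by omega⟩
      = (if i = j then (1:ℝ) else 0) + M2 i j) ∧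
  (∀ i j : Fin l, X ⟨5*l + (i : ℕ), by omega⟩ ⟨5*l + (j : ℕ), by omega⟩
      = (if i = j then (1:ℝ) else 0) + M3 i j) ∧
  (Vmat l)ᵀ * X * (Vmat l) = 0

namespace Matrix

variable {m n k R : Type*} [Fintype m] [Fintype n]

theorem PosSemidef.fromBlocks_one_one_add [DecidableEq m] [DecidableEq n]
    [Field R] [PartialOrder R] [StarRing R] [StarOrderedRing R]
    {Y : Matrix n n R} (hY : Y.PosSemidef) {P : Matrix m n R} (hP : Pᴴ * P = 1) :
    (fromBlocks 1 P Pᴴ (1 + Y)).PosSemidef := by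
  have : Invertible (1 : Matrix m m R) := invertibleOne
  rw [PosDef.fromBlocks₁₁ (A := 1) P (1 + Y) PosDef.one, inv_one, Matrix.mul_one, hP,
    add_sub_cancel_left]
  exact hY

theorem conjTranspose_fromRows_mul_fromBlocks_mul_fromRows [DecidableEq m] [DecidableEq n]
    [CommRing R] [StarRing R] {P : Matrix m n R} (hP : Pᴴ * P = 1) (Y : Matrix n n R)
    (W : Matrix n k R) :
    (fromRows (-(P * W)) W)ᴴ * fromBlocks 1 P Pᴴ (1 + Y) * fromRows (-(P * W)) W
      = Wᴴ * Y * W := by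
  simp only [conjTranspose_fromRows_eq_fromCols_conjTranspose, fromCols_mul_fromBlocks,
    fromCols_mul_fromRows, conjTranspose_neg, conjTranspose_mul, Matrix.mul_assoc, hP,
    Matrix.neg_mul, Matrix.mul_neg, Matrix.mul_add, Matrix.add_mul, Matrix.mul_one,
    ← Matrix.mul_assoc Pᴴ P, Matrix.one_mul]
  abel

theorem conjTranspose_mul_submatrix_symm_mul [Star R] [NonUnitalNonAssocSemiring R]
    (e : m ≃ n) (A : Matrix m m R) (V : Matrix n k R) :
    Vᴴ * A.submatrix e.symm e.symm * V = (V.submatrix e id)ᴴ * A * V.submatrix e id := by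
  conv_lhs => rw [show V = (V.submatrix e id).submatrix e.symm id by simp]
  rw [conjTranspose_submatrix, submatrix_mul_equiv, submatrix_mul_equiv]
  simp

end Matrix

def finHalvesEquiv (l : ℕ) : Fin (3*l) ⊕ Fin (3*l) ≃ Fin (6*l) :=
  finSumFinEquiv.trans (finCongr (by omega))

theorem finHalvesEquiv_symm_mk_of_lt {l a : ℕ} (ha : a < 6*l) (h : a < 3*l) :
    (finHalvesEquiv l).symm ⟨a, ha⟩ = Sum.inl ⟨a, h⟩ := by
  rw [Equiv.symm_apply_eq]
  ext
  simp [finHalvesEquiv]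

theorem finHalvesEquiv_symm_mk_of_le {l a : ℕ} (ha : a < 6*l) (h : 3*l ≤ a) :
    (finHalvesEquiv l).symm ⟨a, ha⟩ = Sum.inr ⟨a - 3*l, by omega⟩ := by
  rw [Equiv.symm_apply_eq]
  ext
  simp [finHalvesEquiv]
  omega

def signFlip (l : ℕ) : Matrix (Fin (3*l)) (Fin (3*l)) ℝ :=
  diagonal fun k => if (k : ℕ) < 2*l then 1 else -1

theorem signFlip_apply_of_ne {l : ℕ} {i j : Fin (3*l)} (h : (i : ℕ) ≠ j) : signFlip l i j = 0 :=
  diagonal_apply_ne _ (Fin.ne_of_val_ne h)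

theorem signFlip_conjTranspose (l : ℕ) : (signFlip l)ᴴ = signFlip l := by
  simp [signFlip]

theorem signFlip_mul_self (l : ℕ) : signFlip l * signFlip l = 1 := by
  rw [signFlip, diagonal_mul_diagonal, ← diagonal_one]
  congr 1
  ext k
  by_cases h : (k : ℕ) < 2*l <;> simp [h]

theorem signFlip_conjTranspose_mul_self (l : ℕ) : (signFlip l)ᴴ * signFlip l = 1 := by
  rw [signFlip_conjTranspose, signFlip_mul_self]

theorem Vmat_submatrix_finHalvesEquiv (l : ℕ) :
    (Vmat l).submatrix (finHalvesEquiv l) id = fromRows (-(signFlip l * Wmat l)) (Wmat l) := by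
  ext (k | k) j <;> simp [Vmat, Wmat, finHalvesEquiv, signFlip, diagonal_mul] <;> split_ifs <;>
    first | omega | norm_num

def feasiblePoint (l : ℕ) (Y : Matrix (Fin (3*l)) (Fin (3*l)) ℝ) :
    Matrix (Fin (6*l)) (Fin (6*l)) ℝ :=
  (fromBlocks 1 (signFlip l) (signFlip l) (1 + Y)).submatrix
    (finHalvesEquiv l).symm (finHalvesEquiv l).symm

theorem feasiblePoint_posSemidef {l : ℕ} {Y : Matrix (Fin (3*l)) (Fin (3*l)) ℝ}
    (hY : Y.PosSemidef) : (feasiblePoint l Y).PosSemidef := by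
  have h := hY.fromBlocks_one_one_add (signFlip_conjTranspose_mul_self l)
  rw [signFlip_conjTranspose] at h
  exact h.submatrix _

theorem transpose_Vmat_mul_feasiblePoint_mul_Vmat (l : ℕ)
    (Y : Matrix (Fin (3*l)) (Fin (3*l)) ℝ) :
    (Vmat l)ᵀ * feasiblePoint l Y * Vmat l = (Wmat l)ᵀ * Y * Wmat l := by
  have h := conjTranspose_fromRows_mul_fromBlocks_mul_fromRows
    (signFlip_conjTranspose_mul_self l) Y (Wmat l)
  rw [signFlip_conjTranspose, ← Vmat_submatrix_finHalvesEquiv,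
    ← conjTranspose_mul_submatrix_symm_mul] at h
  simpa only [feasiblePoint, conjTranspose_eq_transpose_of_trivial] using h

section feasiblePoint

variable {l a b : ℕ} {Y : Matrix (Fin (3*l)) (Fin (3*l)) ℝ} {ha : a < 6*l} {hb : b < 6*l}

theorem feasiblePoint_apply_of_lt (ha' : a < 3*l) (hb' : b < 3*l) :
    feasiblePoint l Y ⟨a, ha⟩ ⟨b, hb⟩ = if a = b then 1 else 0 := by
  simp [feasiblePoint, finHalvesEquiv_symm_mk_of_lt ha ha', finHalvesEquiv_symm_mk_of_lt hb hb',
    one_apply]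

theorem feasiblePoint_apply_eq_zero (ha' : 3*l ≤ a) (hb' : b < 3*l) (hab : a ≠ 3*l + b) :
    feasiblePoint l Y ⟨a, ha⟩ ⟨b, hb⟩ = 0 := by
  rw [feasiblePoint, submatrix_apply, finHalvesEquiv_symm_mk_of_le ha ha',
    finHalvesEquiv_symm_mk_of_lt hb hb', fromBlocks_apply₂₁,
    signFlip_apply_of_ne (by simp; omega)]

theorem feasiblePoint_apply_of_eq_add {c d : ℕ} (hc : c < 3*l) (hd : d < 3*l)
    (hac : a = 3*l + c) (hbd : b = 3*l + d) :
    feasiblePoint l Y ⟨a, ha⟩ ⟨b, hb⟩ = (if c = d then 1 else 0) + Y ⟨c, hc⟩ ⟨d, hd⟩ := by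
  subst hac hbd
  simp [feasiblePoint, finHalvesEquiv_symm_mk_of_le, one_apply]

end feasiblePoint

theorem Fset_feasiblePoint {l : ℕ} {M1 M2 M3 : Matrix (Fin l) (Fin l) ℝ}
    {Y : Matrix (Fin (3*l)) (Fin (3*l)) ℝ} (hB : Bset l M1 M2 M3 Y) :
    Fset l M1 M2 M3 (feasiblePoint l Y) := by
  obtain ⟨hY, h1, h2, h3, hW⟩ := hB
  refine ⟨feasiblePoint_posSemidef hY, fun i j => ?_, fun i j => ?_, fun i j => ?_,
    fun i j => ?_, fun i j => ?_, fun i j => ?_, fun i j => ?_, fun i j => ?_, ?_⟩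
  · simp [feasiblePoint_apply_of_lt, Fin.val_inj]
  any_goals exact feasiblePoint_apply_eq_zero (by omega) (by omega) (by omega)
  · rw [feasiblePoint_apply_of_eq_add (c := i) (d := j) (by omega) (by omega) rfl rfl, h1]
    simp [Fin.val_inj]
  · rw [feasiblePoint_apply_of_eq_add (c := l + i) (d := l + j) (by omega) (by omega)
      (by omega) (by omega), h2]
    simp [Fin.val_inj]
  · rw [feasiblePoint_apply_of_eq_add (c := 2*l + i) (d := 2*l + j) (by omega) (by omega)
      (by omega) (by omega), h3]
    simp [Fin.val_inj]
  · rw [transpose_Vmat_mul_feasiblePoint_mul_Vmat, hW]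

theorem Fset_nonempty_general (l : ℕ)
    (M1 M2 M3 : Matrix (Fin l) (Fin l) ℝ)
    (h : ∃ X, Bset l M1 M2 M3 X) :
    ∃ X, Fset l M1 M2 M3 X := by
  obtain ⟨Y, hY⟩ := h
  exact ⟨feasiblePoint l Y, Fset_feasiblePoint hY⟩

/-- If `B(M₁,M₂,M₃)` is nonempty, then the feasible set `F(M₁,M₂,M₃)` is nonempty. -/
theorem Fset_nonempty (l : ℕ) (hl : 1 ≤ l)
    (M1 M2 M3 : Matrix (Fin l) (Fin l) ℝ)
    (hM1 : M1.PosSemidef) (hM2 : M2.PosSemidef) (hM3 : M3.PosSemidef)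
    (h : ∃ X, Bset l M1 M2 M3 X) :
    ∃ X, Fset l M1 M2 M3 X :=
  Fset_nonempty_general l M1 M2 M3 h
end
end
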